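/- Let S be a hyponormal unilateral weighted shift on H with nonzero weight sequence (α_n)_{n≥1} and M = lim_{n→∞} |α_n|. Then the approximate point spectrum of S is exactly the circle {λ ∈ ℂ : |λ| = M}. -/

import Mathlib

/-!
Since `S` maps the basis to pairwise orthogonal vectors,
`‖S^k x‖² = ∑ₙ |xₙ|² ∏_{i<k} |α_{n+i}|²`. Hence `‖S‖ ≤ M`, and by monotonicity `S^k` is bounded
below by `∏_{i<k} |α_i|`, which eventually exceeds `|λ|^k` when `|λ| < M`. Outside the circle
`λ - S` is therefore bounded below: for `|λ| > M` by `|λ| - M`, for `|λ| < M` through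
`λ^k - S^k = Q (λ - S)`. On the circle, the truncated formal eigenvectors
`∑_{j<K} (∏_{i<j} α_{N+i}/λ) e_{N+j}` are sent by `λ - S` to a telescoping difference of norm at
most `2M`, while for `N` large all their `K` coefficients have modulus at least `1/2`.
-/

open Filter Topology Finset
open scoped InnerProductSpace

section Orthogonal

variable {𝕜 E F ι : Type*} [RCLike 𝕜] [NormedAddCommGroup E] [InnerProductSpace 𝕜 E]
  [NormedAddCommGroup F] [InnerProductSpace 𝕜 F]

theorem norm_sum_sq_of_pairwise_inner_eq_zero {u : ι → E}
    (hu : Pairwise fun i j => ⟪u i, u j⟫_𝕜 = 0) (s : Finset ι) :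
    ‖∑ i ∈ s, u i‖ ^ 2 = ∑ i ∈ s, ‖u i‖ ^ 2 := by
  have : ((‖∑ i ∈ s, u i‖ : ℝ) : 𝕜) ^ 2 = ∑ i ∈ s, ((‖u i‖ : ℝ) : 𝕜) ^ 2 := by
    simp only [← inner_self_eq_norm_sq_to_K, sum_inner, inner_sum]
    exact sum_congr rfl fun i hi => sum_eq_single i (fun j _ hji => hu hji) (by simp [hi])
  exact mod_cast this

theorem HasSum.norm_sq_of_pairwise_inner_eq_zero {u : ι → E} {y : E} (h : HasSum u y)
    (hu : Pairwise fun i j => ⟪u i, u j⟫_𝕜 = 0) : HasSum (fun i => ‖u i‖ ^ 2) (‖y‖ ^ 2) := by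
  refine (((continuous_norm.pow 2).tendsto y).comp h).congr fun s => ?_
  exact norm_sum_sq_of_pairwise_inner_eq_zero hu s

theorem ContinuousLinearMap.hasSum_norm_sq_apply_of_pairwise_inner_eq_zero
    (b : HilbertBasis ι 𝕜 E) (T : E →L[𝕜] F)
    (hT : Pairwise fun i j => ⟪T (b i), T (b j)⟫_𝕜 = 0) (x : E) :
    HasSum (fun i => ‖b.repr x i‖ ^ 2 * ‖T (b i)‖ ^ 2) (‖T x‖ ^ 2) := by
  have hsum := (b.hasSum_repr x).mapL T
  simp only [map_smul] at hsum
  have horth : Pairwise fun i j => ⟪b.repr x i • T (b i), b.repr x j • T (b j)⟫_𝕜 = 0 :=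
    fun i j hij => by simp only [inner_smul_left, inner_smul_right, hT hij, mul_zero]
  simpa only [norm_smul, mul_pow] using hsum.norm_sq_of_pairwise_inner_eq_zero horth

theorem HilbertBasis.hasSum_norm_sq_repr (b : HilbertBasis ι 𝕜 E) (x : E) :
    HasSum (fun i => ‖b.repr x i‖ ^ 2) (‖x‖ ^ 2) := by
  simpa [b.orthonormal.norm_eq_one] using
    (ContinuousLinearMap.id 𝕜 E).hasSum_norm_sq_apply_of_pairwise_inner_eq_zero b
      b.orthonormal.2 x

variable (b : HilbertBasis ι 𝕜 E) {T : E →L[𝕜] F}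
  (hT : Pairwise fun i j => ⟪T (b i), T (b j)⟫_𝕜 = 0)
include hT

theorem ContinuousLinearMap.mul_norm_le_norm_apply_of_pairwise_inner_eq_zero {c : ℝ}
    (hc : ∀ i, c ≤ ‖T (b i)‖) (x : E) : c * ‖x‖ ≤ ‖T x‖ := by
  rcases le_or_gt c 0 with hc0 | hc0
  · exact (mul_nonpos_of_nonpos_of_nonneg hc0 (norm_nonneg x)).trans (norm_nonneg _)
  refine (pow_le_pow_iff_left₀ (by positivity) (norm_nonneg _) two_ne_zero).mp ?_
  rw [mul_pow]
  refine hasSum_le (fun i => ?_) ((b.hasSum_norm_sq_repr x).mul_left (c ^ 2))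
    (T.hasSum_norm_sq_apply_of_pairwise_inner_eq_zero b hT x)
  rw [mul_comm]
  gcongr
  exact hc i

theorem ContinuousLinearMap.opNorm_le_of_pairwise_inner_eq_zero {C : ℝ} (hC0 : 0 ≤ C)
    (hC : ∀ i, ‖T (b i)‖ ≤ C) : ‖T‖ ≤ C := by
  refine T.opNorm_le_bound hC0 fun x => ?_
  refine (pow_le_pow_iff_left₀ (norm_nonneg _) (by positivity) two_ne_zero).mp ?_
  rw [mul_pow]
  refine hasSum_le (fun i => ?_) (T.hasSum_norm_sq_apply_of_pairwise_inner_eq_zero b hT x)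
    ((b.hasSum_norm_sq_repr x).mul_left (C ^ 2))
  rw [mul_comm]
  gcongr
  exact hC i

end Orthogonal

namespace ContinuousLinearMap

variable {𝕜 E F : Type*} [NontriviallyNormedField 𝕜] [NormedAddCommGroup E] [NormedSpace 𝕜 E]
  [NormedAddCommGroup F] [NormedSpace 𝕜 F]

def IsBoundedBelow (T : E →L[𝕜] F) : Prop :=
  ∃ c : ℝ, 0 < c ∧ ∀ x, c * ‖x‖ ≤ ‖T x‖

variable {T : E →L[𝕜] E} {lam : 𝕜}

theorem isBoundedBelow_smul_one_sub_of_opNorm_lt (h : ‖T‖ < ‖lam‖) :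
    IsBoundedBelow (lam • (1 : E →L[𝕜] E) - T) := by
  refine ⟨‖lam‖ - ‖T‖, sub_pos.mpr h, fun x => ?_⟩
  calc (‖lam‖ - ‖T‖) * ‖x‖ = ‖lam • x‖ - ‖T‖ * ‖x‖ := by rw [norm_smul]; ring
    _ ≤ ‖lam • x‖ - ‖T x‖ := by gcongr; exact T.le_opNorm x
    _ ≤ ‖lam • x - T x‖ := norm_sub_norm_le _ _
    _ = ‖(lam • (1 : E →L[𝕜] E) - T) x‖ := rfl

theorem isBoundedBelow_smul_one_sub_of_pow {k : ℕ} {c : ℝ} (hc : ‖lam‖ ^ k < c)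
    (hT : ∀ x, c * ‖x‖ ≤ ‖(T ^ k) x‖) : IsBoundedBelow (lam • (1 : E →L[𝕜] E) - T) := by
  set Q := ∑ i ∈ range k, (lam • (1 : E →L[𝕜] E)) ^ i * T ^ (k - 1 - i)
  have hfactor : lam ^ k • (1 : E →L[𝕜] E) - T ^ k = Q * (lam • 1 - T) := by
    rw [((Commute.one_left T).smul_left lam).geom_sum₂_mul, smul_pow, one_pow]
  refine ⟨(c - ‖lam‖ ^ k) / (‖Q‖ + 1), by have := norm_nonneg Q; positivity, fun x => ?_⟩
  rw [div_mul_eq_mul_div, div_le_iff₀ (by positivity)]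
  calc (c - ‖lam‖ ^ k) * ‖x‖ ≤ ‖(T ^ k) x‖ - ‖lam ^ k • x‖ := by
        rw [norm_smul, norm_pow]; linarith [hT x]
    _ ≤ ‖(T ^ k) x - lam ^ k • x‖ := norm_sub_norm_le _ _
    _ = ‖(lam ^ k • (1 : E →L[𝕜] E) - T ^ k) x‖ := norm_sub_rev _ _
    _ = ‖Q ((lam • 1 - T) x)‖ := by rw [hfactor]; rfl
    _ ≤ ‖Q‖ * ‖(lam • 1 - T) x‖ := Q.le_opNorm _
    _ ≤ ‖(lam • (1 : E →L[𝕜] E) - T) x‖ * (‖Q‖ + 1) := by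
        rw [mul_comm]; gcongr; linarith

theorem smul_one_sub_apply_sum_of_apply_eq_smul {v : ℕ → E} (hv : ∀ j, T (v j) = lam • v (j + 1))
    (K : ℕ) : (lam • (1 : E →L[𝕜] E) - T) (∑ j ∈ range K, v j) = lam • (v 0 - v K) := by
  simp only [map_sum, sub_apply, smul_apply, one_apply_eq_self, hv, ← smul_sub, ← smul_sum,
    sum_range_sub']

end ContinuousLinearMap

theorem exists_pow_lt_prod_range_of_monotone {a : ℕ → ℝ} (ha : Monotone a) (ha0 : 0 < a 0)
    {r : ℝ} (hr : 0 ≤ r) {N : ℕ} (hN : r < a N) : ∃ k, r ^ k < ∏ i ∈ range k, a i := by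
  have haN : 0 < a N := hr.trans_lt hN
  have hP : 0 < ∏ i ∈ range N, a i := prod_pos fun i _ => ha0.trans_le (ha (Nat.zero_le i))
  have hq : Tendsto (fun m => r ^ N * (r / a N) ^ m) atTop (𝓝 (r ^ N * 0)) :=
    (tendsto_pow_atTop_nhds_zero_of_lt_one (by positivity) ((div_lt_one haN).mpr hN)).const_mul _
  rw [mul_zero] at hq
  obtain ⟨m, hm⟩ := (hq.eventually (gt_mem_nhds hP)).exists
  refine ⟨N + m, ?_⟩
  calc r ^ (N + m) = r ^ N * (r / a N) ^ m * a N ^ m := by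
        rw [div_pow, pow_add]; field_simp
    _ < (∏ i ∈ range N, a i) * a N ^ m := by gcongr
    _ ≤ (∏ i ∈ range N, a i) * ∏ i ∈ range m, a (N + i) := by
        gcongr
        calc a N ^ m = ∏ _i ∈ range m, a N := by rw [prod_const, card_range]
          _ ≤ ∏ i ∈ range m, a (N + i) :=
            prod_le_prod (fun _ _ => haN.le) fun i _ => ha (Nat.le_add_right N i)
    _ = ∏ i ∈ range (N + m), a i := (prod_range_add a N m).symm

section WeightedShift

open ContinuousLinearMap

variable {𝕜 H : Type*} [RCLike 𝕜] [NormedAddCommGroup H] [InnerProductSpace 𝕜 H]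
  (e : HilbertBasis ℕ 𝕜 H) {α : ℕ → 𝕜} {S : H →L[𝕜] H} (hS : ∀ n, S (e n) = α n • e (n + 1))
include hS

theorem weightedShift_pow_apply (k n : ℕ) :
    (S ^ k) (e n) = (∏ i ∈ range k, α (n + i)) • e (n + k) := by
  induction k generalizing n with
  | zero => simp
  | succ k ih =>
    rw [pow_succ, mul_apply_eq_comp, hS, map_smul, ih, smul_smul, prod_range_succ']
    simp only [add_zero, add_assoc, add_comm 1, mul_comm]

theorem weightedShift_opNorm_le {M : ℝ} (hM : ∀ n, ‖α n‖ ≤ M) : ‖S‖ ≤ M := by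
  refine S.opNorm_le_of_pairwise_inner_eq_zero e ?_ ((norm_nonneg _).trans (hM 0)) fun n => ?_
  · intro m n hmn
    simp only [hS, inner_smul_left, inner_smul_right,
      e.orthonormal.2 (fun h => hmn (Nat.succ_injective h)), mul_zero]
  · simpa [hS, norm_smul, e.orthonormal.norm_eq_one] using hM n

theorem weightedShift_prod_norm_mul_le_norm_pow_apply (hα : Monotone fun n => ‖α n‖) (k : ℕ)
    (x : H) : (∏ i ∈ range k, ‖α i‖) * ‖x‖ ≤ ‖(S ^ k) x‖ := by
  refine (S ^ k).mul_norm_le_norm_apply_of_pairwise_inner_eq_zero e ?_ (fun n => ?_) x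
  · intro m n hmn
    simp only [weightedShift_pow_apply e hS, inner_smul_left, inner_smul_right,
      e.orthonormal.2 (fun h => hmn (Nat.add_right_cancel h)), mul_zero]
  · rw [weightedShift_pow_apply e hS, norm_smul, e.orthonormal.norm_eq_one, mul_one, norm_prod]
    exact prod_le_prod (fun i _ => norm_nonneg _) fun i _ => hα (Nat.le_add_left i n)

variable {lam : 𝕜} (hlam : lam ≠ 0) (hle : ∀ n, ‖α n‖ ≤ ‖lam‖)
  (hlim : Tendsto (fun n => ‖α n‖) atTop (𝓝 ‖lam‖))
include hlam hle hlim

theorem weightedShift_exists_approx_eigenvector (K : ℕ) :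
    ∃ x, ‖(lam • (1 : H →L[𝕜] H) - S) x‖ ≤ 2 * ‖lam‖ ∧ K ≤ 4 * ‖x‖ ^ 2 := by
  have hlam' : ‖lam‖ ≠ 0 := norm_ne_zero_iff.mpr hlam
  have hratio : ∀ j, Tendsto (fun N => ∏ i ∈ range j, ‖α (N + i)‖ / ‖lam‖) atTop (𝓝 1) := by
    intro j
    simpa [div_self hlam'] using tendsto_finsetProd (range j) fun i _ =>
      (hlim.comp (tendsto_add_atTop_nat i)).div_const ‖lam‖
  obtain ⟨N, hN⟩ := ((eventually_all_finset (range K)).2 fun j _ =>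
    (hratio j).eventually (lt_mem_nhds (by norm_num : (1 / 2 : ℝ) < 1))).exists
  set v : ℕ → H := fun j => (∏ i ∈ range j, α (N + i) / lam) • e (N + j)
  have hv_norm : ∀ j, ‖v j‖ = ∏ i ∈ range j, ‖α (N + i)‖ / ‖lam‖ := by
    simp [v, norm_smul, e.orthonormal.norm_eq_one, norm_prod]
  have hv_le : ∀ j, ‖v j‖ ≤ 1 := fun j => (hv_norm j).trans_le <|
    prod_le_one (fun _ _ => by positivity) fun i _ => div_le_one_of_le₀ (hle _) (norm_nonneg _)
  have hv_orth : Pairwise fun i j => ⟪v i, v j⟫_𝕜 = 0 := by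
    intro i j hij
    simp only [v, inner_smul_left, inner_smul_right,
      e.orthonormal.2 (fun h => hij (Nat.add_left_cancel h)), mul_zero]
  have hSv : ∀ j, S (v j) = lam • v (j + 1) := by
    intro j
    simp only [v, map_smul, hS, smul_smul, prod_range_succ]
    congr 1
    field_simp
  refine ⟨∑ j ∈ range K, v j, ?_, ?_⟩
  · rw [smul_one_sub_apply_sum_of_apply_eq_smul hSv, norm_smul]
    calc ‖lam‖ * ‖v 0 - v K‖ ≤ ‖lam‖ * (1 + 1) := by
          gcongr; exact (norm_sub_le _ _).trans (add_le_add (hv_le 0) (hv_le K))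
      _ = 2 * ‖lam‖ := by ring
  · rw [norm_sum_sq_of_pairwise_inner_eq_zero hv_orth]
    calc (K : ℝ) = 4 * ∑ _j ∈ range K, (1 / 2 : ℝ) ^ 2 := by
          simp only [sum_const, card_range, nsmul_eq_mul]; ring
      _ ≤ 4 * ∑ j ∈ range K, ‖v j‖ ^ 2 := by
          gcongr with j hj
          rw [hv_norm]
          exact (hN j hj).le

theorem weightedShift_not_isBoundedBelow :
    ¬ IsBoundedBelow (lam • (1 : H →L[𝕜] H) - S) := by
  rintro ⟨c, hc, hbound⟩
  obtain ⟨K, hK⟩ := exists_nat_gt (16 * ‖lam‖ ^ 2 / c ^ 2)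
  obtain ⟨x, hx_image, hx_norm⟩ := weightedShift_exists_approx_eigenvector e hS hlam hle hlim K
  have hx : (c * ‖x‖) ^ 2 ≤ (2 * ‖lam‖) ^ 2 :=
    pow_le_pow_left₀ (by positivity) ((hbound x).trans hx_image) 2
  rw [div_lt_iff₀ (by positivity)] at hK
  nlinarith

end WeightedShift

theorem approxPointSpectrum_of_hyponormal_unilateral_weighted_shift_general
    {H : Type*} [NormedAddCommGroup H] [InnerProductSpace ℂ H]
    (e : HilbertBasis ℕ ℂ H) (α : ℕ → ℂ) (S : H →L[ℂ] H)
    (hS : ∀ n : ℕ, S (e n) = α n • e (n + 1))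
    (hmono : ∀ n : ℕ, ‖α n‖ ≤ ‖α (n + 1)‖)
    (hnz : ∀ n : ℕ, α n ≠ 0)
    (M : ℝ) (hM : Filter.Tendsto (fun n : ℕ => ‖α n‖) Filter.atTop (nhds M)) :
    {lam : ℂ | ¬ ∃ c : ℝ, 0 < c ∧ ∀ x : H,
        c * ‖x‖ ≤ ‖(lam • (1 : H →L[ℂ] H) - S) x‖}
      = {lam : ℂ | ‖lam‖ = M} := by
  have hα : Monotone fun n => ‖α n‖ := monotone_nat_of_le_succ hmono
  have hle : ∀ n, ‖α n‖ ≤ M := hα.ge_of_tendsto hM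
  have hα0 : 0 < ‖α 0‖ := norm_pos_iff.mpr (hnz 0)
  ext lam
  change ¬ ContinuousLinearMap.IsBoundedBelow (lam • 1 - S) ↔ ‖lam‖ = M
  refine ⟨fun hlam => ?_, fun hlam => ?_⟩
  · by_contra hne
    rcases lt_or_gt_of_ne hne with hlt | hgt
    · obtain ⟨N, hN⟩ := (hM.eventually (lt_mem_nhds hlt)).exists
      obtain ⟨k, hk⟩ := exists_pow_lt_prod_range_of_monotone hα hα0 (norm_nonneg lam) hN
      exact hlam <| ContinuousLinearMap.isBoundedBelow_smul_one_sub_of_pow hk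
        (weightedShift_prod_norm_mul_le_norm_pow_apply e hS hα k)
    · exact hlam <| ContinuousLinearMap.isBoundedBelow_smul_one_sub_of_opNorm_lt
        ((weightedShift_opNorm_le e hS hle).trans_lt hgt)
  · subst hlam
    have hlam0 : lam ≠ 0 := norm_pos_iff.mp (hα0.trans_le (hle 0))
    exact weightedShift_not_isBoundedBelow e hS hlam0 hle hM

/-- The approximate point spectrum of a hyponormal unilateral weighted shift with
nonzero weights is exactly the circle of radius `M = lim ‖α n‖`. -/
theorem approxPointSpectrum_of_hyponormal_unilateral_weighted_shift
    {H : Type*} [NormedAddCommGroup H] [InnerProductSpace ℂ H] [CompleteSpace H]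
    (e : HilbertBasis ℕ ℂ H) (α : ℕ → ℂ) (S : H →L[ℂ] H)
    (hS : ∀ n : ℕ, S (e n) = α n • e (n + 1))
    (hmono : ∀ n : ℕ, ‖α n‖ ≤ ‖α (n + 1)‖)
    (hnz : ∀ n : ℕ, α n ≠ 0)
    (M : ℝ) (hM : Filter.Tendsto (fun n : ℕ => ‖α n‖) Filter.atTop (nhds M)) :
    {lam : ℂ | ¬ ∃ c : ℝ, 0 < c ∧ ∀ x : H,
        c * ‖x‖ ≤ ‖(lam • (1 : H →L[ℂ] H) - S) x‖}
      = {lam : ℂ | ‖lam‖ = M} :=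
  approxPointSpectrum_of_hyponormal_unilateral_weighted_shift_general e α S hS hmono hnz M hM
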